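/- Let K ≥ 4 be an even integer and let Q_K be the square 2^K-ary QAM constellation. Set X = {1, −1, i, −i} and Y = {(4m−2^{K/2}+3) + (2^{K/2}−1−4n)·i : m, n ∈ ℤ, 0 ≤ m, n ≤ 2^{(K−2)/2}−1}. Then (X, Y) is a uniquely factorable constellation pair, {y/x : x ∈ X, y ∈ Y} = Q_K, and the minimum of |y − y'| over all distinct y, y' ∈ Y equals 4. -/

import Mathlib

/-- A pair `(X, Y)` of sets of complex numbers is a uniquely factorable
constellation pair (UFCP) if `x * y' = x' * y` with `x, x' ∈ X` and
`y, y' ∈ Y` implies `x = x'` and `y = y'`. -/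
def IsUFCP (X Y : Set ℂ) : Prop :=
  ∀ x ∈ X, ∀ x' ∈ X, ∀ y ∈ Y, ∀ y' ∈ Y, x * y' = x' * y → x = x' ∧ y = y'

/-- The square `2^K`-ary QAM constellation (for even `K ≥ 2`). -/
def sqQAM (K : ℕ) : Set ℂ :=
  {z | ∃ m n : ℤ, -(2 : ℤ) ^ ((K - 2) / 2) + 1 ≤ m ∧ m ≤ (2 : ℤ) ^ ((K - 2) / 2) ∧
    -(2 : ℤ) ^ ((K - 2) / 2) + 1 ≤ n ∧ n ≤ (2 : ℤ) ^ ((K - 2) / 2) ∧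
    z = (2 * (m : ℂ) - 1) + (2 * (n : ℂ) - 1) * Complex.I}

/-- The every-other-point sub-constellation of the square `2^K`-ary QAM
constellation along horizontal and vertical lines, for even `K ≥ 4`. -/
def hvY (K : ℕ) : Set ℂ :=
  {z | ∃ m n : ℤ, 0 ≤ m ∧ m ≤ (2 : ℤ) ^ ((K - 2) / 2) - 1 ∧
      0 ≤ n ∧ n ≤ (2 : ℤ) ^ ((K - 2) / 2) - 1 ∧
      z = (4 * (m : ℂ) - (2 : ℂ) ^ (K / 2) + 3) +
          ((2 : ℂ) ^ (K / 2) - 1 - 4 * (n : ℂ)) * Complex.I}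

/-!
Both constellations are sets of Gaussian integers `a + b i` with coordinates in `(-N, N)`,
`N = 2 ^ (K / 2)`: all odd coordinates for `Q_K`, coordinates `≡ 3 (mod 4)` for `Y`.
The units `1, -1, i, -i` act on odd pairs by `(a, b) ↦ (a, b), (-a, -b), (-b, a), (b, -a)`, which
permute the four classes of `(a mod 4, b mod 4)` simply transitively. Hence every point of `Q_K`
is `y / x` for exactly one pair `(x, y)`, and `x y' = x' y` forces `x = x'`. Distinct points of `Y`
differ by a nonzero multiple of `4` in some coordinate, and `-1 - i`, `3 - i` realize distance `4`.
-/

open Complex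

def gaussPoints (S : Set ℤ) : Set ℂ :=
  {z | ∃ a ∈ S, ∃ b ∈ S, z = a + b * I}

theorem pow_four_eq_one_iff {x : ℂ} : x ^ 4 = 1 ↔ x = 1 ∨ x = -1 ∨ x = I ∨ x = -I := by
  constructor
  · intro h
    have hfactor : (x - 1) * (x + 1) * (x - I) * (x + I) = 0 := by
      linear_combination h - (x ^ 2 - 1) * I_sq
    simp only [mul_eq_zero, sub_eq_zero, add_eq_zero_iff_eq_neg] at hfactor
    tauto
  · rintro (rfl | rfl | rfl | rfl) <;> norm_num [pow_succ, I_mul_I]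

theorem units_eq_setOf_pow_four : ({1, -1, I, -I} : Set ℂ) = {x | x ^ 4 = 1} := by
  ext x
  simp only [Set.mem_insert_iff, Set.mem_singleton_iff, Set.mem_ofPred_eq, pow_four_eq_one_iff]

section

variable {S : Set ℤ}

theorem gaussPoints_mono {T : Set ℤ} (h : S ⊆ T) : gaussPoints S ⊆ gaussPoints T := by
  rintro z ⟨a, ha, b, hb, rfl⟩
  exact ⟨a, h ha, b, h hb, rfl⟩

theorem mul_mem_gaussPoints_of_pow_four_eq_one (hS : ∀ a ∈ S, -a ∈ S) {u z : ℂ}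
    (hu : u ^ 4 = 1) (hz : z ∈ gaussPoints S) : u * z ∈ gaussPoints S := by
  obtain ⟨a, ha, b, hb, rfl⟩ := hz
  rcases pow_four_eq_one_iff.1 hu with rfl | rfl | rfl | rfl
  · exact ⟨a, ha, b, hb, one_mul _⟩
  · exact ⟨-a, hS a ha, -b, hS b hb, by push_cast; ring⟩
  · exact ⟨-b, hS b hb, a, ha, by push_cast; linear_combination b * I_sq⟩
  · exact ⟨b, hb, -a, hS a ha, by push_cast; linear_combination -b * I_sq⟩

theorem eq_one_of_mul_mem_gaussPoints (hS : ∀ a ∈ S, a % 4 = 3) {u y : ℂ} (hu : u ^ 4 = 1)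
    (hy : y ∈ gaussPoints S) (huy : u * y ∈ gaussPoints S) : u = 1 := by
  obtain ⟨a, ha, b, hb, rfl⟩ := hy
  obtain ⟨c, hc, d, hd, h⟩ := huy
  have ha4 := hS a ha
  have hb4 := hS b hb
  have hc4 := hS c hc
  have hd4 := hS d hd
  rcases pow_four_eq_one_iff.1 hu with rfl | rfl | rfl | rfl
  · rfl
  · have : -a = c := by exact_mod_cast (by simpa using congrArg re h : -(a : ℝ) = c)
    omega
  · have : -b = c := by exact_mod_cast (by simpa using congrArg re h : -(b : ℝ) = c)
    omega
  · have : -a = d := by exact_mod_cast (by simpa using congrArg im h : -(a : ℝ) = d)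
    omega

theorem isUFCP_gaussPoints (hS : ∀ a ∈ S, a % 4 = 3) :
    IsUFCP {x | x ^ 4 = 1} (gaussPoints S) := by
  intro x (hx : x ^ 4 = 1) x' (hx' : x' ^ 4 = 1) y hy y' hy' h
  have hx0 : x ≠ 0 := by rintro rfl; norm_num at hx
  have hrot : x' / x * y = y' := by field_simp; exact h.symm
  have hunit : x' / x = 1 :=
    eq_one_of_mul_mem_gaussPoints hS (by rw [div_pow, hx, hx', div_one]) hy (hrot ▸ hy')
  rw [div_eq_one_iff_eq hx0] at hunit
  subst hunit
  exact ⟨rfl, by simpa [hx0] using h.symm⟩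

theorem four_le_norm_sub_of_mem_gaussPoints (hS : ∀ a ∈ S, a % 4 = 3) {y y' : ℂ}
    (hy : y ∈ gaussPoints S) (hy' : y' ∈ gaussPoints S) (hne : y ≠ y') : 4 ≤ ‖y - y'‖ := by
  obtain ⟨a, ha, b, hb, rfl⟩ := hy
  obtain ⟨c, hc, d, hd, rfl⟩ := hy'
  have ha4 := hS a ha
  have hb4 := hS b hb
  have hc4 := hS c hc
  have hd4 := hS d hd
  have hcoord : a ≠ c ∨ b ≠ d := by
    by_contra! h
    exact hne (by rw [h.1, h.2])
  rcases hcoord with hac | hbd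
  · calc (4 : ℝ) ≤ |((a - c : ℤ) : ℝ)| := by exact_mod_cast le_abs.2 (by omega)
      _ = |(a + b * I - (c + d * I)).re| := by simp
      _ ≤ _ := abs_re_le_norm _
  · calc (4 : ℝ) ≤ |((b - d : ℤ) : ℝ)| := by exact_mod_cast le_abs.2 (by omega)
      _ = |(a + b * I - (c + d * I)).im| := by simp
      _ ≤ _ := abs_im_le_norm _

end

def pamLevels (N : ℤ) : Set ℤ :=
  {a | a % 2 = 1 ∧ -N < a ∧ a < N}

def hvLevels (N : ℤ) : Set ℤ :=
  {a ∈ pamLevels N | a % 4 = 3}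

section

variable {N : ℤ}

theorem neg_mem_pamLevels {a : ℤ} (ha : a ∈ pamLevels N) : -a ∈ pamLevels N := by
  obtain ⟨hodd, hlo, hhi⟩ := ha
  exact ⟨by omega, by omega, by omega⟩

theorem exists_mul_mem_gaussPoints_hvLevels {z : ℂ} (hz : z ∈ gaussPoints (pamLevels N)) :
    ∃ x : ℂ, x ^ 4 = 1 ∧ x * z ∈ gaussPoints (hvLevels N) := by
  obtain ⟨a, ha, b, hb, rfl⟩ := hz
  have hodd : a % 2 = 1 ∧ b % 2 = 1 := ⟨ha.1, hb.1⟩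
  rcases (by omega : a % 4 = 3 ∧ b % 4 = 3 ∨ a % 4 = 1 ∧ b % 4 = 1 ∨
      a % 4 = 3 ∧ b % 4 = 1 ∨ a % 4 = 1 ∧ b % 4 = 3) with h | h | h | h
  · exact ⟨1, one_pow _, a, ⟨ha, h.1⟩, b, ⟨hb, h.2⟩, one_mul _⟩
  · refine ⟨-1, by norm_num, -a, ⟨neg_mem_pamLevels ha, by omega⟩,
      -b, ⟨neg_mem_pamLevels hb, by omega⟩, ?_⟩
    push_cast; ring
  · refine ⟨I, by norm_num [pow_succ], -b, ⟨neg_mem_pamLevels hb, by omega⟩, a, ⟨ha, h.1⟩, ?_⟩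
    push_cast; linear_combination b * I_sq
  · refine ⟨-I, by norm_num [pow_succ], b, ⟨hb, h.2⟩, -a, ⟨neg_mem_pamLevels ha, by omega⟩, ?_⟩
    push_cast; linear_combination -b * I_sq

theorem setOf_div_eq_gaussPoints_pamLevels :
    {w : ℂ | ∃ x ∈ {x : ℂ | x ^ 4 = 1}, ∃ y ∈ gaussPoints (hvLevels N), w = y / x} =
      gaussPoints (pamLevels N) := by
  ext w
  constructor
  · rintro ⟨x, hx, y, hy, rfl⟩
    have hinv : x⁻¹ ^ 4 = 1 := by rw [inv_pow, hx, inv_one]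
    rw [div_eq_inv_mul]
    exact mul_mem_gaussPoints_of_pow_four_eq_one (fun _ => neg_mem_pamLevels) hinv
      (gaussPoints_mono (fun _ ha => ha.1) hy)
  · intro hw
    obtain ⟨x, hx, hxw⟩ := exists_mul_mem_gaussPoints_hvLevels hw
    have hx0 : x ≠ 0 := by rintro rfl; norm_num at hx
    exact ⟨x, hx, x * w, hxw, by field_simp⟩

theorem exists_norm_sub_eq_four (hN : 4 ≤ N) :
    ∃ y ∈ gaussPoints (hvLevels N), ∃ y' ∈ gaussPoints (hvLevels N), y ≠ y' ∧ ‖y - y'‖ = 4 := by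
  have hm1 : -1 ∈ hvLevels N := ⟨⟨by omega, by omega, by omega⟩, by omega⟩
  have h3 : 3 ∈ hvLevels N := ⟨⟨by omega, by omega, by omega⟩, by omega⟩
  refine ⟨_, ⟨-1, hm1, -1, hm1, rfl⟩, _, ⟨3, h3, -1, hm1, rfl⟩, ?_, ?_⟩
  · norm_num [Complex.ext_iff]
  · norm_num

end

theorem sqQAM_eq_gaussPoints {K : ℕ} (hK : 2 ≤ K) :
    sqQAM K = gaussPoints (pamLevels (2 ^ (K / 2))) := by
  obtain ⟨j, hj, hKj⟩ : ∃ j, (K - 2) / 2 = j ∧ K / 2 = j + 1 := ⟨(K - 2) / 2, rfl, by omega⟩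
  have hpow : (2 : ℤ) ^ (K / 2) = 2 * 2 ^ j := by rw [hKj, pow_succ']
  simp only [sqQAM, hj, hpow]
  generalize (2 : ℤ) ^ j = M
  ext z
  constructor
  · rintro ⟨m, n, hm0, hm1, hn0, hn1, rfl⟩
    exact ⟨2 * m - 1, ⟨by omega, by omega, by omega⟩, 2 * n - 1, ⟨by omega, by omega, by omega⟩,
      by push_cast; rfl⟩
  · rintro ⟨a, ⟨ha, haN⟩, b, ⟨hb, hbN⟩, rfl⟩
    obtain ⟨m, rfl⟩ : ∃ m, a = 2 * m - 1 := ⟨(a + 1) / 2, by omega⟩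
    obtain ⟨n, rfl⟩ : ∃ n, b = 2 * n - 1 := ⟨(b + 1) / 2, by omega⟩
    exact ⟨m, n, by omega, by omega, by omega, by omega, by push_cast; rfl⟩

theorem hvY_eq_gaussPoints {K : ℕ} (hK : 4 ≤ K) :
    hvY K = gaussPoints (hvLevels (2 ^ (K / 2))) := by
  obtain ⟨j, hj, hKj⟩ : ∃ j, (K - 2) / 2 = j + 1 ∧ K / 2 = j + 2 := ⟨(K - 4) / 2, by omega, by omega⟩
  -- `4 ∣ 2 ^ (K / 2)` is what makes both coordinates of every point of `Y` be `≡ 3 (mod 4)`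
  have hpow : (2 : ℤ) ^ (K / 2) = 4 * 2 ^ j := by rw [hKj, pow_succ', pow_succ']; ring
  have hpowC : (2 : ℂ) ^ (K / 2) = ((4 * 2 ^ j : ℤ) : ℂ) := by rw [← hpow]; push_cast; rfl
  have hpow' : (2 : ℤ) ^ ((K - 2) / 2) = 2 * 2 ^ j := by rw [hj, pow_succ']
  simp only [hvY, hpowC, hpow, hpow']
  generalize (2 : ℤ) ^ j = M
  ext z
  constructor
  · rintro ⟨m, n, hm0, hm1, hn0, hn1, rfl⟩
    refine ⟨4 * m - 4 * M + 3, ⟨⟨by omega, by omega, by omega⟩, by omega⟩,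
      4 * M - 1 - 4 * n, ⟨⟨by omega, by omega, by omega⟩, by omega⟩, ?_⟩
    push_cast; ring
  · rintro ⟨a, ⟨⟨ha, haN⟩, ha4⟩, b, ⟨⟨hb, hbN⟩, hb4⟩, rfl⟩
    obtain ⟨m, rfl⟩ : ∃ m, a = 4 * m - 4 * M + 3 := ⟨(a + 4 * M - 3) / 4, by omega⟩
    obtain ⟨n, rfl⟩ : ∃ n, b = 4 * M - 1 - 4 * n := ⟨(4 * M - 1 - b) / 4, by omega⟩
    refine ⟨m, n, by omega, by omega, by omega, by omega, ?_⟩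
    push_cast; ring

theorem ufcp_sqQAM_four_general (K : ℕ) (hK4 : 4 ≤ K) :
    IsUFCP ({1, -1, Complex.I, -Complex.I} : Set ℂ) (hvY K) ∧
    {w : ℂ | ∃ x ∈ ({1, -1, Complex.I, -Complex.I} : Set ℂ),
        ∃ y ∈ hvY K, w = y / x} = sqQAM K ∧
    (∀ y ∈ hvY K, ∀ y' ∈ hvY K, y ≠ y' → (4 : ℝ) ≤ ‖y - y'‖) ∧
    (∃ y ∈ hvY K, ∃ y' ∈ hvY K, y ≠ y' ∧ ‖y - y'‖ = 4) := by
  have hN : (4 : ℤ) ≤ 2 ^ (K / 2) :=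
    calc (4 : ℤ) = 2 ^ 2 := by norm_num
      _ ≤ 2 ^ (K / 2) := pow_le_pow_right₀ (by norm_num) (by omega)
  have hres : ∀ a ∈ hvLevels (2 ^ (K / 2)), a % 4 = 3 := fun _ ha => ha.2
  rw [units_eq_setOf_pow_four, hvY_eq_gaussPoints hK4, sqQAM_eq_gaussPoints (by omega)]
  exact ⟨isUFCP_gaussPoints hres, setOf_div_eq_gaussPoints_pamLevels,
    fun y hy y' hy' => four_le_norm_sub_of_mem_gaussPoints hres hy hy', exists_norm_sub_eq_four hN⟩

/-- With `X = {1, -1, i, -i}` and `Y = hvY K`, `(X, Y)` is a UFCP factorizing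
the square `2^K`-ary QAM constellation, and the minimum distance between
distinct points of `Y` is `4`. -/
theorem ufcp_sqQAM_four (K : ℕ) (hK4 : 4 ≤ K) (hKeven : K % 2 = 0) :
    IsUFCP ({1, -1, Complex.I, -Complex.I} : Set ℂ) (hvY K) ∧
    {w : ℂ | ∃ x ∈ ({1, -1, Complex.I, -Complex.I} : Set ℂ),
        ∃ y ∈ hvY K, w = y / x} = sqQAM K ∧
    (∀ y ∈ hvY K, ∀ y' ∈ hvY K, y ≠ y' → (4 : ℝ) ≤ ‖y - y'‖) ∧
    (∃ y ∈ hvY K, ∃ y' ∈ hvY K, y ≠ y' ∧ ‖y - y'‖ = 4) :=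
  ufcp_sqQAM_four_general K hK4
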